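/- For every integer m ≥ 2, the 2-coloring of [1, 8m-6+⌊(2m-2)/3⌋] given by the string 0 1^{m-1} 0^{m-1} 1^{m-1} 0^{⌊(2m-2)/3⌋} 1^{m-⌊(2m-2)/3⌋-1} 0^{m-1} 1^{2m-1+⌊(2m-2)/3⌋} 0^{m-1} admits no three monochromatic m-subsets B₁ <_p B₂ <_p B₃ with diam(B₁) ≤ diam(B₂) ≤ diam(B₃). Consequently f(m,m,m;2) ≥ 8m-5+⌊(2m-2)/3⌋. -/

import Mathlib

/-!
Write `j = ⌊(2m-2)/3⌋`. If `B` is monochromatic of colour `c` with `min B = a`, `max B = b`, then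
`[a, b]` holds at least `m` points of colour `c`; reading this off the runs of the colouring gives
a few linear constraints on `a`, `b` and `b - a`. If `diam B₁ ≥ 2m - 2`, then `B₂` starts after
`2m - 1`, so it ends so late that `B₃` no longer fits with `diam B₃ ≥ diam B₂`. Otherwise `B₁` ends
after `3m - 2 + j`, which leaves only the long run of ones `[5m - 3, 7m - 5 + j]` for `B₂` and `B₃`;
it is too short for two sets of diameter `≥ diam B₁`, because every set outside it has diameter
`≥ min(m - 1 + j, 2m - 2 - j)` and `3j ≤ 2m - 2`.

For the bound on `f(m,m,m;2)` the set under the infimum must be nonempty (`sInf ∅ = 0`): by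
pigeonhole on `[1, 2m-1]`, `[2m, 6m-4]` and `[6m-3, 14m-10]`, every colouring of `[1, 14m-10]`
has a solution.
-/

open Finset

/-- diameter of a finite set of naturals: max - min (0 for ∅). -/
def diam (X : Finset ℕ) : ℕ := WithBot.unbotD 0 X.max - WithTop.untopD 0 X.min

/-- B is monochromatic under Δ. -/
def Mono (Δ : ℕ → Fin 2) (B : Finset ℕ) : Prop := ∃ c, ∀ x ∈ B, Δ x = c

/-- X <_p Y : every element of X precedes every element of Y. -/
def PLt (X Y : Finset ℕ) : Prop := ∀ x ∈ X, ∀ y ∈ Y, x < y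

/-- There exist three monochromatic m-subsets B₁ <_p B₂ <_p B₃ of [1,N]
with nondecreasing diameters. -/
def HasSol (m N : ℕ) (Δ : ℕ → Fin 2) : Prop :=
  ∃ B₁ B₂ B₃ : Finset ℕ,
    B₁ ⊆ Finset.Icc 1 N ∧ B₂ ⊆ Finset.Icc 1 N ∧ B₃ ⊆ Finset.Icc 1 N ∧
    B₁.card = m ∧ B₂.card = m ∧ B₃.card = m ∧
    Mono Δ B₁ ∧ Mono Δ B₂ ∧ Mono Δ B₃ ∧
    PLt B₁ B₂ ∧ PLt B₂ B₃ ∧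
    diam B₁ ≤ diam B₂ ∧ diam B₂ ≤ diam B₃

/-- f(m,m,m;2): the least N such that every 2-coloring of [1,N] has a solution. -/
noncomputable def f3 (m : ℕ) : ℕ := sInf {N | ∀ Δ : ℕ → Fin 2, HasSol m N Δ}

theorem diam_eq_max'_sub_min' {B : Finset ℕ} (hB : B.Nonempty) :
    diam B = B.max' hB - B.min' hB := by
  rw [diam, ← coe_max' hB, ← coe_min' hB]
  rfl

theorem sub_le_diam {B : Finset ℕ} {x y : ℕ} (hx : x ∈ B) (hy : y ∈ B) : y - x ≤ diam B := by
  rw [diam_eq_max'_sub_min' ⟨x, hx⟩]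
  have := B.min'_le x hx
  have := B.le_max' y hy
  omega

theorem card_le_diam_add_one (B : Finset ℕ) : B.card ≤ diam B + 1 := by
  obtain rfl | hB := B.eq_empty_or_nonempty
  · simp
  have hsub : B ⊆ Icc (B.min' hB) (B.max' hB) := fun x hx =>
    mem_Icc.2 ⟨B.min'_le x hx, B.le_max' x hx⟩
  have := card_le_card hsub
  rw [Nat.card_Icc] at this
  rw [diam_eq_max'_sub_min' hB]
  omega

theorem diam_le_of_subset_Icc {B : Finset ℕ} {u v : ℕ} (hB : B ⊆ Icc u v) : diam B ≤ v - u := by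
  obtain rfl | hne := B.eq_empty_or_nonempty
  · simp [diam]
  have hmin := mem_Icc.1 (hB (B.min'_mem hne))
  have hmax := mem_Icc.1 (hB (B.max'_mem hne))
  rw [diam_eq_max'_sub_min' hne]
  omega

theorem pLt_of_subset_Icc {X Y : Finset ℕ} {u v u' v' : ℕ} (hX : X ⊆ Icc u v)
    (hY : Y ⊆ Icc u' v') (h : v < u') : PLt X Y := fun x hx y hy => by
  have := mem_Icc.1 (hX hx)
  have := mem_Icc.1 (hY hy)
  omega

theorem HasSol.mono {m N N' : ℕ} {Δ : ℕ → Fin 2} (h : HasSol m N Δ) (hN : N ≤ N') :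
    HasSol m N' Δ := by
  obtain ⟨B₁, B₂, B₃, h₁, h₂, h₃, rest⟩ := h
  have hIcc : Icc 1 N ⊆ Icc 1 N' := Icc_subset_Icc le_rfl hN
  exact ⟨B₁, B₂, B₃, h₁.trans hIcc, h₂.trans hIcc, h₃.trans hIcc, rest⟩

theorem exists_mono_subset_Icc_le_diam (Δ : ℕ → Fin 2) {m k : ℕ} (hm : 2 ≤ m) (hmk : m ≤ k)
    (u : ℕ) : ∃ B ⊆ Icc u (u + 2 * k - 2), B.card = m ∧ Mono Δ B ∧ k - 1 ≤ diam B := by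
  obtain ⟨c, -, hc⟩ := exists_lt_card_fiber_of_mul_lt_card_of_maps_to
    (s := Icc u (u + 2 * k - 2)) (t := univ) (f := Δ) (n := k - 1) (fun _ _ => mem_univ _)
    (by simp only [card_univ, Fintype.card_fin, Nat.card_Icc]; omega)
  set T := {x ∈ Icc u (u + 2 * k - 2) | Δ x = c}
  have hT : T.Nonempty := card_pos.1 (by omega)
  obtain ⟨B, hends, hBT, hB⟩ := exists_subsuperset_card_eq
    (s := {T.min' hT, T.max' hT}) (n := m)
    (insert_subset_iff.2 ⟨T.min'_mem hT, singleton_subset_iff.2 (T.max'_mem hT)⟩)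
    (card_le_two.trans hm) (by omega)
  refine ⟨B, hBT.trans (filter_subset _ _), hB, ⟨c, fun x hx => (mem_filter.1 (hBT hx)).2⟩, ?_⟩
  calc k - 1 ≤ diam T := by have := card_le_diam_add_one T; omega
    _ = T.max' hT - T.min' hT := diam_eq_max'_sub_min' hT
    _ ≤ diam B := sub_le_diam (hends (by simp)) (hends (by simp))

theorem hasSol_fourteen_mul_sub_ten {m : ℕ} (hm : 2 ≤ m) (Δ : ℕ → Fin 2) :
    HasSol m (14 * m - 10) Δ := by
  obtain ⟨B₁, hB₁, hc₁, hmono₁, -⟩ := exists_mono_subset_Icc_le_diam Δ hm le_rfl 1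
  obtain ⟨B₂, hB₂, hc₂, hmono₂, hd₂⟩ :=
    exists_mono_subset_Icc_le_diam Δ hm (k := 2 * m - 1) (by omega) (2 * m)
  obtain ⟨B₃, hB₃, hc₃, hmono₃, hd₃⟩ :=
    exists_mono_subset_Icc_le_diam Δ hm (k := 4 * m - 3) (by omega) (6 * m - 3)
  have hd₁ := diam_le_of_subset_Icc hB₁
  have hd₂' := diam_le_of_subset_Icc hB₂
  refine ⟨B₁, B₂, B₃, hB₁.trans (Icc_subset_Icc le_rfl (by omega)),
    hB₂.trans (Icc_subset_Icc (by omega) (by omega)),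
    hB₃.trans (Icc_subset_Icc (by omega) (by omega)), hc₁, hc₂, hc₃, hmono₁, hmono₂, hmono₃,
    pLt_of_subset_Icc hB₁ hB₂ (by omega), pLt_of_subset_Icc hB₂ hB₃ (by omega),
    by omega, by omega⟩

theorem Nat.count_add_card_le_count (p : ℕ → Prop) [DecidablePred p] {B : Finset ℕ} {a b : ℕ}
    (hab : a ≤ b) (hB : ∀ x ∈ B, a ≤ x ∧ x < b ∧ p x) : Nat.count p a + B.card ≤ Nat.count p b := by
  have hdisj : Disjoint {x ∈ range a | p x} B := disjoint_left.2 fun x hx hxB => by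
    have := mem_range.1 (mem_filter.1 hx).1
    have := hB x hxB
    omega
  rw [Nat.count_eq_card_filter_range, Nat.count_eq_card_filter_range,
    ← card_union_of_disjoint hdisj]
  refine card_le_card fun x hx => ?_
  rcases mem_union.1 hx with hx | hx
  · obtain ⟨hxa, hpx⟩ := mem_filter.1 hx
    exact mem_filter.2 ⟨mem_range.2 ((mem_range.1 hxa).trans_le hab), hpx⟩
  · obtain ⟨-, hxb, hpx⟩ := hB x hx
    exact mem_filter.2 ⟨mem_range.2 hxb, hpx⟩

theorem Nat.count_eq_add_sub_of_forall {p : ℕ → Prop} [DecidablePred p] {u x : ℕ} (hux : u ≤ x)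
    (h : ∀ y, u ≤ y → y < x → p y) : Nat.count p x = Nat.count p u + (x - u) := by
  obtain ⟨n, rfl⟩ := Nat.exists_eq_add_of_le hux
  rw [Nat.count_add, Nat.count_of_forall (p := fun k => p (u + k))
    fun k hk => h (u + k) (by omega) (by omega)]
  omega

theorem Nat.count_eq_of_forall_not {p : ℕ → Prop} [DecidablePred p] {u x : ℕ} (hux : u ≤ x)
    (h : ∀ y, u ≤ y → y < x → ¬p y) : Nat.count p x = Nat.count p u := by
  obtain ⟨n, rfl⟩ := Nat.exists_eq_add_of_le hux
  rw [Nat.count_add, (Nat.count_iff_forall_not (p := fun k => p (u + k))).2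
    fun k hk => h (u + k) (by omega) (by omega), add_zero]

theorem count_eq_zero_add_count_eq_one (Δ : ℕ → Fin 2) (x : ℕ) :
    Nat.count (Δ · = 0) x + Nat.count (Δ · = 1) x = x := by
  induction x with
  | zero => simp
  | succ x ih =>
    rw [Nat.count_succ, Nat.count_succ]
    split_ifs <;> omega

/-- The span `[a, b] = [min B, max B]` of a monochromatic `m`-set `B`: its ends share a colour `c`,
of which `[a, b]` contains at least `m` points. -/
def IsMonoSpan (Δ : ℕ → Fin 2) (m a b : ℕ) : Prop :=
  ∃ c, Δ a = c ∧ Δ b = c ∧ Nat.count (Δ · = c) a + m ≤ Nat.count (Δ · = c) (b + 1)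

theorem Mono.isMonoSpan_min'_max' {Δ : ℕ → Fin 2} {B : Finset ℕ} {m : ℕ} (h : Mono Δ B)
    (hB : B.Nonempty) (hcard : B.card = m) : IsMonoSpan Δ m (B.min' hB) (B.max' hB) := by
  subst hcard
  obtain ⟨c, hc⟩ := h
  refine ⟨c, hc _ (B.min'_mem hB), hc _ (B.max'_mem hB), Nat.count_add_card_le_count _ ?_ ?_⟩
  · have := B.min'_le _ (B.max'_mem hB)
    omega
  · exact fun x hx => ⟨B.min'_le x hx, Nat.lt_succ_of_le (B.le_max' x hx), hc x hx⟩

theorem IsMonoSpan.le {Δ : ℕ → Fin 2} {m a b : ℕ} (h : IsMonoSpan Δ m a b) (hm : 0 < m) :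
    a ≤ b := by
  obtain ⟨c, -, -, hc⟩ := h
  have := Nat.lt_of_count_lt_count (p := (Δ · = c)) (a := a) (b := b + 1) (by omega)
  omega

def coloring (m : ℕ) (x : ℕ) : Fin 2 :=
  if x ≤ 1 then 0
  else if x ≤ m then 1
  else if x ≤ 2 * m - 1 then 0
  else if x ≤ 3 * m - 2 then 1
  else if x ≤ 3 * m - 2 + (2 * m - 2) / 3 then 0
  else if x ≤ 4 * m - 3 then 1
  else if x ≤ 5 * m - 4 then 0
  else if x ≤ 7 * m - 5 + (2 * m - 2) / 3 then 1
  else 0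

theorem coloring_eq_zero_iff {m x : ℕ} :
    coloring m x = 0 ↔ x ≤ 1 ∨ m + 1 ≤ x ∧ x ≤ 2 * m - 1 ∨
      3 * m - 1 ≤ x ∧ x ≤ 3 * m - 2 + (2 * m - 2) / 3 ∨ 4 * m - 2 ≤ x ∧ x ≤ 5 * m - 4 ∨
      7 * m - 4 + (2 * m - 2) / 3 ≤ x := by
  unfold coloring
  split_ifs <;> simp <;> omega

theorem count_coloring_eq_zero_of_le {m : ℕ} (hm : 1 ≤ m) :
    let z := Nat.count (coloring m · = 0)
    (∀ x ≤ 2, z x = x) ∧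
    (∀ x, 2 ≤ x → x ≤ m + 1 → z x = 2) ∧
    (∀ x, m + 1 ≤ x → x ≤ 2 * m → z x + m = x + 1) ∧
    (∀ x, 2 * m ≤ x → x ≤ 3 * m - 1 → z x = m + 1) := by
  intro z
  have zero_on {u x : ℕ} (hux : u ≤ x) (h : ∀ y, u ≤ y → y < x → coloring m y = 0) :
      z x = z u + (x - u) := Nat.count_eq_add_sub_of_forall hux h
  have one_on {u x : ℕ} (hux : u ≤ x) (h : ∀ y, u ≤ y → y < x → ¬coloring m y = 0) :
      z x = z u := Nat.count_eq_of_forall_not hux h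
  have h₀ : ∀ x ≤ 2, z x = x := fun x hx => by
    rw [zero_on (Nat.zero_le x) fun y _ _ => coloring_eq_zero_iff.2 (by omega)]
    simp [z]
  have h₁ : ∀ x, 2 ≤ x → x ≤ m + 1 → z x = 2 := fun x h h' => by
    rw [one_on h fun y _ _ => by rw [coloring_eq_zero_iff]; omega, h₀ 2 le_rfl]
  have h₂ : ∀ x, m + 1 ≤ x → x ≤ 2 * m → z x + m = x + 1 := fun x h h' => by
    rw [zero_on h fun y _ _ => coloring_eq_zero_iff.2 (by omega),
      h₁ (m + 1) (by omega) le_rfl]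
    omega
  refine ⟨h₀, h₁, h₂, fun x h h' => ?_⟩
  rw [one_on h fun y _ _ => by rw [coloring_eq_zero_iff]; omega]
  have := h₂ (2 * m) (by omega) le_rfl
  omega

theorem count_coloring_eq_zero_of_ge {m : ℕ} (hm : 1 ≤ m) :
    let z := Nat.count (coloring m · = 0)
    (∀ x, 3 * m - 1 ≤ x → x ≤ 3 * m - 1 + (2 * m - 2) / 3 → z x + 2 * m = x + 2) ∧
    (∀ x, 3 * m - 1 + (2 * m - 2) / 3 ≤ x → x ≤ 4 * m - 2 → z x = m + 1 + (2 * m - 2) / 3) ∧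
    (∀ x, 4 * m - 2 ≤ x → x ≤ 5 * m - 3 → z x + 3 * m = x + 3 + (2 * m - 2) / 3) ∧
    (∀ x, 5 * m - 3 ≤ x → x ≤ 7 * m - 4 + (2 * m - 2) / 3 → z x = 2 * m + (2 * m - 2) / 3) ∧
    (∀ x, 7 * m - 4 + (2 * m - 2) / 3 ≤ x → z x + 5 * m = x + 4) := by
  intro z
  have zero_on {u x : ℕ} (hux : u ≤ x) (h : ∀ y, u ≤ y → y < x → coloring m y = 0) :
      z x = z u + (x - u) := Nat.count_eq_add_sub_of_forall hux h
  have one_on {u x : ℕ} (hux : u ≤ x) (h : ∀ y, u ≤ y → y < x → ¬coloring m y = 0) :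
      z x = z u := Nat.count_eq_of_forall_not hux h
  have h₃ : z (3 * m - 1) = m + 1 := (count_coloring_eq_zero_of_le hm).2.2.2 _ (by omega) le_rfl
  have h₄ : ∀ x, 3 * m - 1 ≤ x → x ≤ 3 * m - 1 + (2 * m - 2) / 3 → z x + 2 * m = x + 2 :=
    fun x h h' => by
    rw [zero_on h fun y _ _ => coloring_eq_zero_iff.2 (by omega), h₃]
    omega
  have h₅ : ∀ x, 3 * m - 1 + (2 * m - 2) / 3 ≤ x → x ≤ 4 * m - 2 →
      z x = m + 1 + (2 * m - 2) / 3 := fun x h h' => by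
    rw [one_on h fun y _ _ => by rw [coloring_eq_zero_iff]; omega]
    have := h₄ (3 * m - 1 + (2 * m - 2) / 3) (by omega) le_rfl
    omega
  have h₆ : ∀ x, 4 * m - 2 ≤ x → x ≤ 5 * m - 3 → z x + 3 * m = x + 3 + (2 * m - 2) / 3 :=
    fun x h h' => by
    rw [zero_on h fun y _ _ => coloring_eq_zero_iff.2 (by omega),
      h₅ (4 * m - 2) (by omega) le_rfl]
    omega
  have h₇ : ∀ x, 5 * m - 3 ≤ x → x ≤ 7 * m - 4 + (2 * m - 2) / 3 →
      z x = 2 * m + (2 * m - 2) / 3 := fun x h h' => by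
    rw [one_on h fun y _ _ => by rw [coloring_eq_zero_iff]; omega]
    have := h₆ (5 * m - 3) (by omega) le_rfl
    omega
  refine ⟨h₄, h₅, h₆, h₇, fun x h => ?_⟩
  rw [zero_on h fun y _ _ => coloring_eq_zero_iff.2 (by omega),
    h₇ _ (by omega) le_rfl]
  omega

theorem count_coloring_of_eq_zero {m x : ℕ} (hm : 1 ≤ m) (hx : coloring m x = 0) :
    x ≤ 1 ∧ Nat.count (coloring m · = 0) x = x ∨
    m + 1 ≤ x ∧ x ≤ 2 * m - 1 ∧ Nat.count (coloring m · = 0) x + m = x + 1 ∨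
    3 * m - 1 ≤ x ∧ x ≤ 3 * m - 2 + (2 * m - 2) / 3 ∧
      Nat.count (coloring m · = 0) x + 2 * m = x + 2 ∨
    4 * m - 2 ≤ x ∧ x ≤ 5 * m - 4 ∧
      Nat.count (coloring m · = 0) x + 3 * m = x + 3 + (2 * m - 2) / 3 ∨
    7 * m - 4 + (2 * m - 2) / 3 ≤ x ∧ Nat.count (coloring m · = 0) x + 5 * m = x + 4 := by
  obtain ⟨h₀, -, h₂, -⟩ := count_coloring_eq_zero_of_le hm
  obtain ⟨h₄, -, h₆, -, h₈⟩ := count_coloring_eq_zero_of_ge hm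
  rcases coloring_eq_zero_iff.1 hx with h | h | h | h | h
  · exact Or.inl ⟨h, h₀ x (by omega)⟩
  · exact Or.inr <| Or.inl ⟨h.1, h.2, h₂ x h.1 (by omega)⟩
  · exact Or.inr <| Or.inr <| Or.inl ⟨h.1, h.2, h₄ x h.1 (by omega)⟩
  · exact Or.inr <| Or.inr <| Or.inr <| Or.inl ⟨h.1, h.2, h₆ x h.1 (by omega)⟩
  · exact Or.inr <| Or.inr <| Or.inr <| Or.inr ⟨h, h₈ x h⟩

theorem count_coloring_of_eq_one {m x : ℕ} (hm : 1 ≤ m) (hx : coloring m x = 1) :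
    2 ≤ x ∧ x ≤ m ∧ Nat.count (coloring m · = 1) x + 2 = x ∨
    2 * m ≤ x ∧ x ≤ 3 * m - 2 ∧ Nat.count (coloring m · = 1) x + m + 1 = x ∨
    3 * m - 1 + (2 * m - 2) / 3 ≤ x ∧ x ≤ 4 * m - 3 ∧
      Nat.count (coloring m · = 1) x + m + 1 + (2 * m - 2) / 3 = x ∨
    5 * m - 3 ≤ x ∧ x ≤ 7 * m - 5 + (2 * m - 2) / 3 ∧
      Nat.count (coloring m · = 1) x + 2 * m + (2 * m - 2) / 3 = x := by
  obtain ⟨-, h₁, -, h₃⟩ := count_coloring_eq_zero_of_le hm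
  obtain ⟨-, h₅, -, h₇, -⟩ := count_coloring_eq_zero_of_ge hm
  have hsum := count_eq_zero_add_count_eq_one (coloring m) x
  have hx₀ : ¬coloring m x = 0 := by omega
  rw [coloring_eq_zero_iff] at hx₀
  rcases (by omega : 2 ≤ x ∧ x ≤ m ∨ 2 * m ≤ x ∧ x ≤ 3 * m - 2 ∨
      3 * m - 1 + (2 * m - 2) / 3 ≤ x ∧ x ≤ 4 * m - 3 ∨
      5 * m - 3 ≤ x ∧ x ≤ 7 * m - 5 + (2 * m - 2) / 3) with h | h | h | h
  · have := h₁ x h.1 (by omega)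
    omega
  · have := h₃ x h.1 (by omega)
    omega
  · have := h₅ x h.1 (by omega)
    omega
  · have := h₇ x h.1 (by omega)
    omega

theorem IsMonoSpan.coloring_cases {m a b : ℕ} (h : IsMonoSpan (coloring m) m a b) :
    coloring m a = 0 ∧ coloring m b = 0 ∧
      Nat.count (coloring m · = 0) a + m ≤ Nat.count (coloring m · = 0) b + 1 ∨
    coloring m a = 1 ∧ coloring m b = 1 ∧
      Nat.count (coloring m · = 1) a + m ≤ Nat.count (coloring m · = 1) b + 1 := by
  obtain ⟨c, ha, hb, hc⟩ := h
  rw [Nat.count_succ, if_pos hb] at hc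
  rcases (by omega : c = 0 ∨ c = 1) with rfl | rfl
  exacts [Or.inl ⟨ha, hb, hc⟩, Or.inr ⟨ha, hb, hc⟩]

theorem IsMonoSpan.coloring_right_ge {m a b : ℕ} (hm : 2 ≤ m)
    (h : IsMonoSpan (coloring m) m a b) (ha : 1 ≤ a) :
    2 * m - 1 ≤ b := by
  rcases h.coloring_cases with ⟨hca, hcb, hcount⟩ | ⟨hca, hcb, hcount⟩
  · rcases count_coloring_of_eq_zero (by omega) hca with h | h | h | h | h <;>
      rcases count_coloring_of_eq_zero (by omega) hcb with h' | h' | h' | h' | h' <;> omega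
  · rcases count_coloring_of_eq_one (by omega) hca with h | h | h | h <;>
      rcases count_coloring_of_eq_one (by omega) hcb with h' | h' | h' | h' <;> omega

theorem IsMonoSpan.coloring_diam_ge_of_right_le {m a b : ℕ} (hm : 2 ≤ m)
    (h : IsMonoSpan (coloring m) m a b) (ha : 1 ≤ a) (hb : b ≤ 3 * m - 2 + (2 * m - 2) / 3) :
    2 * m - 2 ≤ b - a := by
  rcases h.coloring_cases with ⟨hca, hcb, hcount⟩ | ⟨hca, hcb, hcount⟩
  · rcases count_coloring_of_eq_zero (by omega) hca with h | h | h | h | h <;>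
      rcases count_coloring_of_eq_zero (by omega) hcb with h' | h' | h' | h' | h' <;> omega
  · rcases count_coloring_of_eq_one (by omega) hca with h | h | h | h <;>
      rcases count_coloring_of_eq_one (by omega) hcb with h' | h' | h' | h' <;> omega

theorem IsMonoSpan.coloring_right_ge_of_diam_ge {m a b : ℕ} (hm : 2 ≤ m)
    (h : IsMonoSpan (coloring m) m a b) (ha : 2 * m ≤ a) (hd : 2 * m - 2 ≤ b - a) :
    5 * m - 3 ≤ b ∧ 7 * m - 5 + (2 * m - 2) / 3 ≤ b + (b - a) := by
  rcases h.coloring_cases with ⟨hca, hcb, hcount⟩ | ⟨hca, hcb, hcount⟩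
  · rcases count_coloring_of_eq_zero (by omega) hca with h | h | h | h | h <;>
      rcases count_coloring_of_eq_zero (by omega) hcb with h' | h' | h' | h' | h' <;> omega
  · rcases count_coloring_of_eq_one (by omega) hca with h | h | h | h <;>
      rcases count_coloring_of_eq_one (by omega) hcb with h' | h' | h' | h' <;> omega

theorem IsMonoSpan.coloring_left_le_of_right_ge {m a b : ℕ} (hm : 2 ≤ m)
    (h : IsMonoSpan (coloring m) m a b) (hb : 7 * m - 4 + (2 * m - 2) / 3 ≤ b)
    (hbN : b ≤ 8 * m - 6 + (2 * m - 2) / 3) :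
    a ≤ 5 * m - 4 := by
  rcases h.coloring_cases with ⟨hca, hcb, hcount⟩ | ⟨hca, hcb, hcount⟩
  · rcases count_coloring_of_eq_zero (by omega) hca with h | h | h | h | h <;>
      rcases count_coloring_of_eq_zero (by omega) hcb with h' | h' | h' | h' | h' <;> omega
  · rcases count_coloring_of_eq_one (by omega) hca with h | h | h | h <;>
      rcases count_coloring_of_eq_one (by omega) hcb with h' | h' | h' | h' <;> omega

theorem IsMonoSpan.coloring_of_left_ge {m a b : ℕ} (hm : 2 ≤ m)
    (h : IsMonoSpan (coloring m) m a b) (ha : 3 * m + (2 * m - 2) / 3 ≤ a)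
    (hb : b ≤ 8 * m - 6 + (2 * m - 2) / 3) :
    5 * m - 3 ≤ a ∧ b ≤ 7 * m - 5 + (2 * m - 2) / 3 ∧ m ≤ b + 1 - a ∨
    a ≤ 5 * m - 4 ∧ 2 * m - 2 ≤ b - a ∧ 5 * m - 2 + (2 * m - 2) / 3 ≤ b := by
  rcases h.coloring_cases with ⟨hca, hcb, hcount⟩ | ⟨hca, hcb, hcount⟩
  · rcases count_coloring_of_eq_zero (by omega) hca with h | h | h | h | h <;>
      rcases count_coloring_of_eq_zero (by omega) hcb with h' | h' | h' | h' | h' <;> omega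
  · rcases count_coloring_of_eq_one (by omega) hca with h | h | h | h <;>
      rcases count_coloring_of_eq_one (by omega) hcb with h' | h' | h' | h' <;> omega

theorem IsMonoSpan.coloring_diam_ge_of_left_lt {m a b : ℕ} (hm : 2 ≤ m)
    (h : IsMonoSpan (coloring m) m a b) (ha : a < 5 * m - 3) :
    2 * m - 2 + (2 * m - 2) / 3 ≤ 2 * (b - a) := by
  rcases h.coloring_cases with ⟨hca, hcb, hcount⟩ | ⟨hca, hcb, hcount⟩
  · rcases count_coloring_of_eq_zero (by omega) hca with h | h | h | h | h <;>
      rcases count_coloring_of_eq_zero (by omega) hcb with h' | h' | h' | h' | h' <;> omega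
  · rcases count_coloring_of_eq_one (by omega) hca with h | h | h | h <;>
      rcases count_coloring_of_eq_one (by omega) hcb with h' | h' | h' | h' <;> omega

theorem coloring_not_increasing_spans {m a₁ b₁ a₂ b₂ a₃ b₃ : ℕ} (hm : 2 ≤ m)
    (h₁ : IsMonoSpan (coloring m) m a₁ b₁) (h₂ : IsMonoSpan (coloring m) m a₂ b₂)
    (h₃ : IsMonoSpan (coloring m) m a₃ b₃) (ha₁ : 1 ≤ a₁) (h₁₂ : b₁ < a₂) (h₂₃ : b₂ < a₃)
    (hb₃ : b₃ ≤ 8 * m - 6 + (2 * m - 2) / 3) (hd₁₂ : b₁ - a₁ ≤ b₂ - a₂)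
    (hd₂₃ : b₂ - a₂ ≤ b₃ - a₃) : False := by
  have := h₁.le (by omega)
  have := h₂.le (by omega)
  have := h₃.le (by omega)
  rcases le_or_gt (2 * m - 2) (b₁ - a₁) with hwide | hnarrow
  · have := h₁.coloring_right_ge hm ha₁
    have := h₂.coloring_right_ge_of_diam_ge hm (by omega) (by omega)
    have := h₃.coloring_left_le_of_right_ge hm (by omega) hb₃
    omega
  · have hb₁ : 3 * m - 1 + (2 * m - 2) / 3 ≤ b₁ := by
      by_contra!
      have := h₁.coloring_diam_ge_of_right_le hm ha₁ (by omega)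
      omega
    have := h₃.coloring_of_left_ge hm (by omega) hb₃
    rcases h₂.coloring_of_left_ge hm (by omega) (by omega) with ⟨ha₂, -, -⟩ | ⟨-, hd₂, hb₂⟩
    · -- `B₂` and `B₃` lie in the long run of ones
      rcases lt_or_ge a₁ (5 * m - 3) with ha₁' | ha₁'
      · have := h₁.coloring_diam_ge_of_left_lt hm ha₁'
        omega
      · have := h₁.coloring_of_left_ge hm (by omega) (by omega)
        have := h₂.coloring_of_left_ge hm (by omega) (by omega)
        omega
    · omega

theorem not_hasSol_coloring {m : ℕ} (hm : 2 ≤ m) :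
    ¬HasSol m (8 * m - 6 + (2 * m - 2) / 3) (coloring m) := by
  rintro ⟨B₁, B₂, B₃, hB₁, hB₂, hB₃, hc₁, hc₂, hc₃, hmono₁, hmono₂, hmono₃, h₁₂, h₂₃, hd₁₂, hd₂₃⟩
  have hne₁ : B₁.Nonempty := card_pos.1 (by omega)
  have hne₂ : B₂.Nonempty := card_pos.1 (by omega)
  have hne₃ : B₃.Nonempty := card_pos.1 (by omega)
  rw [diam_eq_max'_sub_min' hne₁, diam_eq_max'_sub_min' hne₂] at hd₁₂
  rw [diam_eq_max'_sub_min' hne₂, diam_eq_max'_sub_min' hne₃] at hd₂₃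
  exact coloring_not_increasing_spans hm (hmono₁.isMonoSpan_min'_max' hne₁ hc₁)
    (hmono₂.isMonoSpan_min'_max' hne₂ hc₂) (hmono₃.isMonoSpan_min'_max' hne₃ hc₃)
    (mem_Icc.1 (hB₁ (B₁.min'_mem hne₁))).1 (h₁₂ _ (B₁.max'_mem hne₁) _ (B₂.min'_mem hne₂))
    (h₂₃ _ (B₂.max'_mem hne₂) _ (B₃.min'_mem hne₃)) (mem_Icc.1 (hB₃ (B₃.max'_mem hne₃))).2
    hd₁₂ hd₂₃

theorem stmt4 (m : ℕ) (hm : 2 ≤ m) :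
    ¬ HasSol m (8 * m - 6 + (2 * m - 2) / 3)
      (fun x =>
        if x ≤ 1 then 0
        else if x ≤ m then 1
        else if x ≤ 2 * m - 1 then 0
        else if x ≤ 3 * m - 2 then 1
        else if x ≤ 3 * m - 2 + (2 * m - 2) / 3 then 0
        else if x ≤ 4 * m - 3 then 1
        else if x ≤ 5 * m - 4 then 0
        else if x ≤ 7 * m - 5 + (2 * m - 2) / 3 then 1
        else 0) ∧
    8 * m - 5 + (2 * m - 2) / 3 ≤ f3 m := by
  refine ⟨not_hasSol_coloring hm,
    le_csInf ⟨14 * m - 10, hasSol_fourteen_mul_sub_ten hm⟩ fun N hN => ?_⟩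
  by_contra! hN'
  exact not_hasSol_coloring hm ((hN (coloring m)).mono (by omega))
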